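/- arXiv:2509.15817 — 5 statements merged into one kernel-verified Lean document; each statement's English description precedes it below -/
import Mathlib

section
/- A twice continuously differentiable function f : ℝⁿ → ℝ satisfying, for some natural number R, ‖∇²f(x)‖_F ≤ p_R(‖x‖) and ‖∇f(x)‖ ≥ q_{R+1}(‖x‖) for all x — where p_R is a polynomial of degree R and q_{R+1} is a polynomial of degree R+1 with positive leading coefficient — is (L₀, L₁)-smooth for any L₁ > 0 and some L₀ > 0; that is, ‖∇²f(x)‖_F ≤ L₀ + L₁‖∇f(x)‖ for all x. -/
/-!
For large `t` the degree gap gives `p t ≤ L₁ q t`, so outside a ball the Hessian bound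
`p(‖x‖)` is dominated by `L₁ ‖∇f x‖ ≥ L₁ q(‖x‖)`; on the remaining compact interval of radii
the continuous function `p` is bounded, which supplies `L₀`.
-/

open Filter Polynomial

theorem Polynomial.eventually_eval_le_of_natDegree_lt {p q : ℝ[X]}
    (hpq : p.natDegree < q.natDegree) (hq : 0 < q.leadingCoeff) :
    ∀ᶠ t in atTop, p.eval t ≤ q.eval t := by
  have hdeg : p.degree < q.degree := degree_lt_degree hpq
  have hpos : 0 < (q - p).degree := by
    rw [degree_sub_eq_left_of_degree_lt hdeg]
    exact natDegree_pos_iff_degree_pos.mp (pos_of_gt hpq)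
  have hlead : 0 ≤ (q - p).leadingCoeff := by
    rw [leadingCoeff_sub_of_degree_lt hdeg]
    exact hq.le
  filter_upwards [(tendsto_atTop_of_leadingCoeff_nonneg _ hpos hlead).eventually_ge_atTop 0]
    with t ht
  simpa using ht

theorem exists_pos_le_add_max_of_eventually_le {P Q : ℝ → ℝ} (hP : Continuous P)
    (hPQ : ∀ᶠ t in atTop, P t ≤ Q t) :
    ∃ C > 0, ∀ t ≥ 0, P t ≤ C + max (Q t) 0 := by
  obtain ⟨M, hM⟩ := hPQ.exists_forall_of_atTop
  obtain ⟨B, hB⟩ := (isCompact_Icc (a := 0) (b := M)).bddAbove_image hP.continuousOn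
  refine ⟨max B 1, by positivity, fun t ht => ?_⟩
  rcases le_or_gt M t with htM | htM
  · linarith [hM t htM, le_max_left (Q t) 0, le_max_right B 1]
  · linarith [hB ⟨t, ⟨ht, htM.le⟩, rfl⟩, le_max_left B 1, le_max_right (Q t) 0]

theorem l0_l1_smoothness_of_polynomial_bounds_general (n : ℕ)
    (f : EuclideanSpace ℝ (Fin n) → ℝ)
    (R : ℕ) (p q : Polynomial ℝ) (hp : p.natDegree = R) (hq : q.natDegree = R + 1)
    (hqlead : 0 < q.leadingCoeff)
    (hH : ∀ x, ‖iteratedFDeriv ℝ 2 f x‖ ≤ p.eval ‖x‖)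
    (hg : ∀ x, ‖gradient f x‖ ≥ q.eval ‖x‖) :
    ∀ L₁ > 0, ∃ L₀ > 0, ∀ x, ‖iteratedFDeriv ℝ 2 f x‖ ≤ L₀ + L₁ * ‖gradient f x‖ := by
  intro L₁ hL₁
  have hdeg : p.natDegree < (C L₁ * q).natDegree := by
    rw [natDegree_C_mul hL₁.ne', hp, hq]
    exact R.lt_succ_self
  have hlead : 0 < (C L₁ * q).leadingCoeff := by
    rw [leadingCoeff_C_mul_of_isUnit (isUnit_iff_ne_zero.mpr hL₁.ne')]
    positivity
  obtain ⟨L₀, hL₀, hbound⟩ := exists_pos_le_add_max_of_eventually_le p.continuous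
    (eventually_eval_le_of_natDegree_lt hdeg hlead)
  refine ⟨L₀, hL₀, fun x => ?_⟩
  calc ‖iteratedFDeriv ℝ 2 f x‖ ≤ p.eval ‖x‖ := hH x
    _ ≤ L₀ + max (L₁ * q.eval ‖x‖) 0 := by simpa using hbound ‖x‖ (norm_nonneg x)
    _ ≤ L₀ + L₁ * ‖gradient f x‖ := by
        gcongr
        exact max_le (by gcongr; exact hg x) (by positivity)

/-- If the Hessian norm of a `C²` function is bounded above by a polynomial of degree `R`
in `‖x‖` and the gradient norm is bounded below by a polynomial of degree `R+1` in `‖x‖`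
with positive leading coefficient, then `f` is `(L₀, L₁)`-smooth for any `L₁ > 0` and
some `L₀ > 0`. -/
theorem l0_l1_smoothness_of_polynomial_bounds (n : ℕ)
    (f : EuclideanSpace ℝ (Fin n) → ℝ) (hf : ContDiff ℝ 2 f)
    (R : ℕ) (p q : Polynomial ℝ) (hp : p.natDegree = R) (hq : q.natDegree = R + 1)
    (hqlead : 0 < q.leadingCoeff)
    (hH : ∀ x, ‖iteratedFDeriv ℝ 2 f x‖ ≤ p.eval ‖x‖)
    (hg : ∀ x, ‖gradient f x‖ ≥ q.eval ‖x‖) :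
    ∀ L₁ > 0, ∃ L₀ > 0, ∀ x, ‖iteratedFDeriv ℝ 2 f x‖ ≤ L₀ + L₁ * ‖gradient f x‖ :=
  l0_l1_smoothness_of_polynomial_bounds_general n f R p q hp hq hqlead hH hg
end

section
/- The polynomial f(x, y) = (1/4)x⁴ + (1/4)y⁴ − (1/2)x²y² on ℝ² is not (L₀, L₁)-smooth: for every L₀, L₁ ≥ 0 there exists (x, y) ∈ ℝ² with ‖∇²f(x,y)‖_F > L₀ + L₁‖∇f(x,y)‖. Indeed ∇f(x,−x) = 0 while ‖∇²f(x,−x)‖_F = 4x² for all x ∈ ℝ. -/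
/-!
The gradient of `f` is `(x³ - xy², y³ - x²y)` and its Hessian is
`[[3x² - y², -2xy], [-2xy, 3y² - x²]]`. On the antidiagonal `y = -x` the gradient vanishes while
every Hessian entry has absolute value `2x²`, so the Frobenius norm `4x²` eventually exceeds
any `L₀`, and `x = L₀ + 1` already does.
-/

lemma deriv_quartic_fst (x y : ℝ) :
    deriv (fun t : ℝ => (1/4) * t^4 + (1/4) * y^4 - (1/2) * t^2 * y^2) x = x^3 - x * y^2 :=
  ((((hasDerivAt_pow 4 x).const_mul (1/4)).add_const _).sub
    (((hasDerivAt_pow 2 x).const_mul (1/2)).mul_const (y^2))).deriv.trans (by push_cast; ring)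

lemma deriv_quartic_snd (x y : ℝ) :
    deriv (fun t : ℝ => (1/4) * x^4 + (1/4) * t^4 - (1/2) * x^2 * t^2) y = y^3 - x^2 * y :=
  ((((hasDerivAt_pow 4 y).const_mul (1/4)).const_add _).sub
    ((hasDerivAt_pow 2 y).const_mul ((1/2) * x^2))).deriv.trans (by push_cast; ring)

lemma deriv_cubic_fst_fst (x y : ℝ) : deriv (fun t : ℝ => t^3 - t * y^2) x = 3 * x^2 - y^2 :=
  ((hasDerivAt_pow 3 x).sub ((hasDerivAt_id' x).mul_const (y^2))).deriv.trans
    (by push_cast; ring)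

lemma deriv_cubic_fst_snd (x y : ℝ) : deriv (fun t : ℝ => x^3 - x * t^2) y = -2 * x * y :=
  (((hasDerivAt_pow 2 y).const_mul x).const_sub (x^3)).deriv.trans (by push_cast; ring)

lemma deriv_cubic_snd_fst (x y : ℝ) : deriv (fun t : ℝ => y^3 - t^2 * y) x = -2 * x * y :=
  (((hasDerivAt_pow 2 x).mul_const y).const_sub (y^3)).deriv.trans (by push_cast; ring)

lemma deriv_cubic_snd_snd (x y : ℝ) : deriv (fun t : ℝ => t^3 - x^2 * t) y = 3 * y^2 - x^2 :=
  ((hasDerivAt_pow 3 y).sub ((hasDerivAt_id' y).const_mul (x^2))).deriv.trans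
    (by push_cast; ring)

/-- The polynomial `f(x,y) = x⁴/4 + y⁴/4 − x²y²/2` is not `(L₀,L₁)`-smooth:
its gradient vanishes along `y = −x` while the Frobenius norm of its Hessian equals `4x²`
there. -/
theorem quartic_not_l0_l1_smooth :
    let f : ℝ → ℝ → ℝ := fun x y => (1/4) * x^4 + (1/4) * y^4 - (1/2) * x^2 * y^2
    let fx : ℝ → ℝ → ℝ := fun x y => deriv (fun t => f t y) x
    let fy : ℝ → ℝ → ℝ := fun x y => deriv (fun t => f x t) y
    let fxx : ℝ → ℝ → ℝ := fun x y => deriv (fun t => fx t y) x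
    let fxy : ℝ → ℝ → ℝ := fun x y => deriv (fun t => fx x t) y
    let fyx : ℝ → ℝ → ℝ := fun x y => deriv (fun t => fy t y) x
    let fyy : ℝ → ℝ → ℝ := fun x y => deriv (fun t => fy x t) y
    (∀ L₀ L₁ : ℝ, 0 ≤ L₀ → 0 ≤ L₁ → ∃ x y : ℝ,
      Real.sqrt (fxx x y ^ 2 + fxy x y ^ 2 + fyx x y ^ 2 + fyy x y ^ 2)
        > L₀ + L₁ * Real.sqrt (fx x y ^ 2 + fy x y ^ 2)) ∧
    (∀ x : ℝ, fx x (-x) = 0 ∧ fy x (-x) = 0 ∧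
      Real.sqrt (fxx x (-x) ^ 2 + fxy x (-x) ^ 2 + fyx x (-x) ^ 2 + fyy x (-x) ^ 2)
        = 4 * x ^ 2) := by
  dsimp only
  simp only [deriv_quartic_fst, deriv_quartic_snd, deriv_cubic_fst_fst, deriv_cubic_fst_snd,
    deriv_cubic_snd_fst, deriv_cubic_snd_snd]
  have antidiagonal (x : ℝ) : x^3 - x * (-x)^2 = 0 ∧ (-x)^3 - x^2 * -x = 0 ∧
      √((3 * x^2 - (-x)^2)^2 + (-2 * x * -x)^2 + (-2 * x * -x)^2 + (3 * (-x)^2 - x^2)^2)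
        = 4 * x^2 := by
    refine ⟨by ring, by ring, ?_⟩
    rw [show (3 * x^2 - (-x)^2)^2 + (-2 * x * -x)^2 + (-2 * x * -x)^2 + (3 * (-x)^2 - x^2)^2
      = (4 * x^2)^2 by ring, Real.sqrt_sq (by positivity)]
  refine ⟨fun L₀ _ _ _ => ⟨L₀ + 1, -(L₀ + 1), ?_⟩, antidiagonal⟩
  obtain ⟨hfx, hfy, hHess⟩ := antidiagonal (L₀ + 1)
  rw [hfx, hfy, hHess, zero_pow two_ne_zero, add_zero, Real.sqrt_zero, mul_zero, add_zero]
  nlinarith [sq_nonneg (L₀ + 1)]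
end

section
/- There do not exist constants L₀, L₁ ≥ 0 such that the function f(x) = exp(‖x‖²) on ℝⁿ satisfies ‖∇²f(x)‖ ≤ L₀ + L₁‖∇f(x)‖ for all x ∈ ℝⁿ. -/
/-! At a point `x` with `‖x‖ = r`, the gradient of `exp ‖x‖²` has norm `2 r e^{r²}`, while the
Hessian `2 e^{r²} (I + 2 x xᵀ)` evaluated at `(x, x)` shows that its norm is at least
`2 e^{r²} (1 + 2 r²)`. After dividing by `e^{r²} ≥ 1`, an `(L₀, L₁)` bound would give
`2 + 4 r² ≤ L₀ + 2 L₁ r` for every `r > 0`, which fails for large `r`. -/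

open Real

section ExpNormSq

variable {E : Type*} [NormedAddCommGroup E] [InnerProductSpace ℝ E]

theorem hasFDerivAt_exp_norm_sq (x : E) :
    HasFDerivAt (fun x : E => exp (‖x‖ ^ 2)) ((2 * exp (‖x‖ ^ 2)) • innerSL ℝ x) x := by
  refine ((hasDerivAt_exp _).comp_hasFDerivAt x
    (hasStrictFDerivAt_norm_sq x).hasFDerivAt).congr_fderiv ?_
  ext y
  simp only [smul_apply, coe_innerSL_apply, nsmul_eq_mul, Nat.cast_ofNat, smul_eq_mul]
  ring

theorem fderiv_exp_norm_sq :
    fderiv ℝ (fun x : E => exp (‖x‖ ^ 2)) = fun x => (2 * exp (‖x‖ ^ 2)) • innerSL ℝ x :=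
  funext fun x => (hasFDerivAt_exp_norm_sq x).fderiv

theorem hasGradientAt_exp_norm_sq [CompleteSpace E] (x : E) :
    HasGradientAt (fun x : E => exp (‖x‖ ^ 2)) ((2 * exp (‖x‖ ^ 2)) • x) x := by
  rw [hasGradientAt_iff_hasFDerivAt, map_smul]
  exact hasFDerivAt_exp_norm_sq x

theorem norm_gradient_exp_norm_sq [CompleteSpace E] (x : E) :
    ‖gradient (fun x : E => exp (‖x‖ ^ 2)) x‖ = 2 * ‖x‖ * exp (‖x‖ ^ 2) := by
  rw [(hasGradientAt_exp_norm_sq x).gradient, norm_smul, norm_of_nonneg (by positivity)]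
  ring

theorem iteratedFDeriv_two_exp_norm_sq_apply (x u v : E) :
    iteratedFDeriv ℝ 2 (fun x : E => exp (‖x‖ ^ 2)) x ![u, v] =
      2 * exp (‖x‖ ^ 2) * (inner ℝ u v + 2 * inner ℝ x u * inner ℝ x v) := by
  have hcoeff := (hasFDerivAt_exp_norm_sq x).const_mul (2 : ℝ)
  have hsecond : HasFDerivAt (fun y : E => (2 * exp (‖y‖ ^ 2)) • innerSL ℝ y) _ x :=
    hcoeff.smul (innerSL ℝ (E := E)).hasFDerivAt
  rw [iteratedFDeriv_two_apply, fderiv_exp_norm_sq, hsecond.fderiv]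
  simp only [Matrix.cons_val_zero, Matrix.cons_val_one, add_apply, smul_apply,
    ContinuousLinearMap.smulRight_apply, innerSL_apply_apply, smul_eq_mul]
  rw [innerSL_apply_apply]
  ring

theorem le_norm_iteratedFDeriv_two_exp_norm_sq {x : E} (hx : x ≠ 0) :
    2 * exp (‖x‖ ^ 2) * (1 + 2 * ‖x‖ ^ 2) ≤ ‖iteratedFDeriv ℝ 2 (fun x : E => exp (‖x‖ ^ 2)) x‖ := by
  have hx' : 0 < ‖x‖ := norm_pos_iff.2 hx
  have h := (iteratedFDeriv ℝ 2 (fun x : E => exp (‖x‖ ^ 2)) x).le_opNorm ![x, x]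
  rw [iteratedFDeriv_two_exp_norm_sq_apply, Fin.prod_univ_two, Matrix.cons_val_zero,
    Matrix.cons_val_one, real_inner_self_eq_norm_sq] at h
  rw [← mul_le_mul_iff_of_pos_right (mul_pos hx' hx')]
  calc 2 * exp (‖x‖ ^ 2) * (1 + 2 * ‖x‖ ^ 2) * (‖x‖ * ‖x‖)
      = ‖2 * exp (‖x‖ ^ 2) * (‖x‖ ^ 2 + 2 * ‖x‖ ^ 2 * ‖x‖ ^ 2)‖ := by
        rw [norm_of_nonneg (by positivity)]; ring
    _ ≤ _ := h

end ExpNormSq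

theorem exists_add_mul_two_mul_exp_sq_lt (L₀ L₁ : ℝ) :
    ∃ r > 0, L₀ + L₁ * (2 * r * exp (r ^ 2)) < 2 * exp (r ^ 2) * (1 + 2 * r ^ 2) := by
  set r := |L₀| + |L₁| + 1
  have hexp : 1 ≤ exp (r ^ 2) := one_le_exp (sq_nonneg r)
  have hL₀ : L₀ ≤ r := by linarith [le_abs_self L₀, abs_nonneg L₁]
  have hL₁ : L₁ ≤ r := by linarith [le_abs_self L₁, abs_nonneg L₀]
  have hr : 1 ≤ r := by linarith [abs_nonneg L₀, abs_nonneg L₁]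
  refine ⟨r, by positivity, ?_⟩
  nlinarith [mul_le_mul_of_nonneg_right hL₁ (by positivity : 0 ≤ 2 * r * exp (r ^ 2)),
    mul_le_mul_of_nonneg_left hexp (sq_nonneg r)]

/-- There do not exist `L₀, L₁ ≥ 0` such that `f(x) = exp(‖x‖²)` satisfies
`‖∇²f(x)‖ ≤ L₀ + L₁‖∇f(x)‖` for all `x`. -/
theorem exp_norm_sq_not_l0_l1_smooth (n : ℕ) (hn : 1 ≤ n)
    (f : EuclideanSpace ℝ (Fin n) → ℝ) (hf : f = fun x => Real.exp (‖x‖ ^ 2)) :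
    ¬ ∃ L₀ L₁ : ℝ, 0 ≤ L₀ ∧ 0 ≤ L₁ ∧
      ∀ x, ‖iteratedFDeriv ℝ 2 f x‖ ≤ L₀ + L₁ * ‖gradient f x‖ := by
  subst hf
  rintro ⟨L₀, L₁, -, -, hsmooth⟩
  have : Nonempty (Fin n) := ⟨⟨0, hn⟩⟩
  obtain ⟨r, hr, hlt⟩ := exists_add_mul_two_mul_exp_sq_lt L₀ L₁
  obtain ⟨x, rfl⟩ := exists_norm_eq (EuclideanSpace ℝ (Fin n)) hr.le
  have hhess := le_norm_iteratedFDeriv_two_exp_norm_sq (norm_pos_iff.1 hr)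
  have hx := hsmooth x
  rw [norm_gradient_exp_norm_sq] at hx
  linarith
end

section
/- For the symmetric matrix factorization objective f(U) = (1/2)‖UUᵀ − Y‖_F², with Y ∈ 𝕊^{n×n} symmetric and U ∈ ℝ^{n×r}, the gradient ∇f(U) = (UUᵀ − Y)U satisfies ‖∇f(U)‖_F² ≥ (1/n²)‖U‖_F⁶ − 2‖Y‖_F‖U‖_F⁴. -/
/-!
Write `‖·‖` for the Frobenius norm and `M = UUᵀU`. Since `(UUᵀ - Y)U = M - YU`, the reverse
triangle inequality gives `‖(UUᵀ - Y)U‖² ≥ ‖M‖² - 2‖M‖‖YU‖`, and submultiplicativity bounds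
`‖M‖‖YU‖ ≤ ‖Y‖‖U‖⁴`. For the main term, `‖U‖² = tr(UUᵀ) ≤ √n ‖UUᵀ‖` by Cauchy–Schwarz on the
diagonal, while `‖UUᵀ‖² = tr(Uᵀ · UUᵀU) ≤ ‖U‖‖M‖` by Cauchy–Schwarz for the trace inner product;
together `‖U‖⁶ ≤ n²‖M‖²`.
-/

open Matrix
open scoped Matrix.Norms.Frobenius

theorem norm_sq_sub_two_mul_norm_mul_norm_le_norm_sub_sq {E : Type*} [SeminormedAddCommGroup E]
    (a b : E) : ‖a‖ ^ 2 - 2 * (‖a‖ * ‖b‖) ≤ ‖a - b‖ ^ 2 := by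
  have h : (‖a‖ - ‖b‖) ^ 2 ≤ ‖a - b‖ ^ 2 :=
    sq_le_sq.2 ((abs_norm_sub_norm_le a b).trans (le_abs_self _))
  nlinarith [sq_nonneg ‖b‖]

section Frobenius

variable {m n : Type*} [Fintype m] [Fintype n]

theorem frobenius_norm_sq_eq_sum_sq (A : Matrix m n ℝ) : ‖A‖ ^ 2 = ∑ i, ∑ j, A i j ^ 2 := by
  rw [frobenius_norm_def, ← Real.sqrt_eq_rpow, Real.sq_sqrt (by positivity)]
  simp

theorem sum_sum_mul_le_frobenius_norm_mul (A B : Matrix m n ℝ) :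
    ∑ i, ∑ j, A i j * B i j ≤ ‖A‖ * ‖B‖ := by
  -- The Frobenius norm is by definition the norm of this inner product space.
  let toL2 (M : Matrix m n ℝ) : PiLp 2 fun _ : m => EuclideanSpace ℝ n :=
    WithLp.toLp 2 fun i => WithLp.toLp 2 (M i)
  calc ∑ i, ∑ j, A i j * B i j = inner ℝ (toL2 A) (toL2 B) := by
        simp [toL2, PiLp.inner_apply, mul_comm]
    _ ≤ ‖A‖ * ‖B‖ := real_inner_le_norm _ _

theorem trace_sq_le_card_mul_frobenius_norm_sq (A : Matrix n n ℝ) :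
    A.trace ^ 2 ≤ Fintype.card n * ‖A‖ ^ 2 := by
  calc A.trace ^ 2 ≤ Fintype.card n * ∑ i, A i i ^ 2 := sq_sum_le_card_mul_sum_sq
    _ ≤ Fintype.card n * ‖A‖ ^ 2 := by
      rw [frobenius_norm_sq_eq_sum_sq]
      gcongr with i
      exact Finset.single_le_sum (f := fun j => A i j ^ 2) (fun j _ => sq_nonneg _)
        (Finset.mem_univ i)

theorem frobenius_norm_sq_eq_trace_mul_transpose (A : Matrix m n ℝ) :
    ‖A‖ ^ 2 = (A * Aᵀ).trace := by
  rw [frobenius_norm_sq_eq_sum_sq, ← sum_hadamard_eq]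
  simp [sq]

theorem frobenius_norm_mul_transpose_self_sq_le (A : Matrix m n ℝ) :
    ‖A * Aᵀ‖ ^ 2 ≤ ‖A‖ * ‖A * Aᵀ * A‖ :=
  calc ‖A * Aᵀ‖ ^ 2 = (A * Aᵀ * (A * Aᵀ)ᵀ).trace := frobenius_norm_sq_eq_trace_mul_transpose _
    _ = (A * (A * Aᵀ * A)ᵀ).trace := by
      simp only [transpose_mul, transpose_transpose, Matrix.mul_assoc]
    _ = ∑ i, ∑ j, A i j * (A * Aᵀ * A) i j := (sum_hadamard_eq _ _).symm
    _ ≤ ‖A‖ * ‖A * Aᵀ * A‖ := sum_sum_mul_le_frobenius_norm_mul _ _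

theorem frobenius_norm_pow_six_le (A : Matrix m n ℝ) :
    ‖A‖ ^ 6 ≤ Fintype.card m ^ 2 * ‖A * Aᵀ * A‖ ^ 2 := by
  rcases (norm_nonneg A).eq_or_lt with hA | hA
  · rw [← hA, zero_pow (by norm_num)]; positivity
  have h4 : ‖A‖ ^ 4 ≤ Fintype.card m * ‖A * Aᵀ‖ ^ 2 :=
    calc ‖A‖ ^ 4 = (A * Aᵀ).trace ^ 2 := by rw [← frobenius_norm_sq_eq_trace_mul_transpose]; ring
      _ ≤ Fintype.card m * ‖A * Aᵀ‖ ^ 2 := trace_sq_le_card_mul_frobenius_norm_sq _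
  have h8 : ‖A‖ ^ 2 * ‖A‖ ^ 6 ≤ ‖A‖ ^ 2 * (Fintype.card m ^ 2 * ‖A * Aᵀ * A‖ ^ 2) :=
    calc ‖A‖ ^ 2 * ‖A‖ ^ 6 = (‖A‖ ^ 4) ^ 2 := by ring
      _ ≤ (Fintype.card m * ‖A * Aᵀ‖ ^ 2) ^ 2 := by gcongr
      _ = Fintype.card m ^ 2 * (‖A * Aᵀ‖ ^ 2) ^ 2 := by ring
      _ ≤ Fintype.card m ^ 2 * (‖A‖ * ‖A * Aᵀ * A‖) ^ 2 := by
        gcongr; exact frobenius_norm_mul_transpose_self_sq_le A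
      _ = ‖A‖ ^ 2 * (Fintype.card m ^ 2 * ‖A * Aᵀ * A‖ ^ 2) := by ring
  exact le_of_mul_le_mul_left h8 (by positivity)

end Frobenius

theorem symmetric_factorization_gradient_lower_bound_general (n r : ℕ)
    (Y : Matrix (Fin n) (Fin n) ℝ)
    (U : Matrix (Fin n) (Fin r) ℝ) :
    ∑ i, ∑ j, ((U * Uᵀ - Y) * U) i j ^ 2
      ≥ (1 / (n : ℝ) ^ 2) * (Real.sqrt (∑ i, ∑ j, U i j ^ 2)) ^ 6
        - 2 * Real.sqrt (∑ i, ∑ j, Y i j ^ 2) * (Real.sqrt (∑ i, ∑ j, U i j ^ 2)) ^ 4 := by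
  simp only [← frobenius_norm_sq_eq_sum_sq, Real.sqrt_sq (norm_nonneg _)]
  set M := U * Uᵀ * U
  have hM_lower : 1 / (n : ℝ) ^ 2 * ‖U‖ ^ 6 ≤ ‖M‖ ^ 2 := by
    rw [one_div_mul_eq_div]
    refine div_le_of_le_mul₀ (by positivity) (by positivity) ?_
    simpa [mul_comm] using frobenius_norm_pow_six_le U
  have hM_upper : ‖M‖ ≤ ‖U‖ ^ 3 :=
    calc ‖M‖ ≤ ‖U‖ * ‖Uᵀ‖ * ‖U‖ :=
          (frobenius_norm_mul _ _).trans (by gcongr; exact frobenius_norm_mul _ _)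
      _ = ‖U‖ ^ 3 := by rw [frobenius_norm_transpose]; ring
  have h_cross : ‖M‖ * ‖Y * U‖ ≤ ‖Y‖ * ‖U‖ ^ 4 :=
    calc ‖M‖ * ‖Y * U‖ ≤ ‖U‖ ^ 3 * (‖Y‖ * ‖U‖) := by gcongr; exact frobenius_norm_mul Y U
      _ = ‖Y‖ * ‖U‖ ^ 4 := by ring
  calc 1 / (n : ℝ) ^ 2 * ‖U‖ ^ 6 - 2 * ‖Y‖ * ‖U‖ ^ 4
      ≤ ‖M‖ ^ 2 - 2 * (‖M‖ * ‖Y * U‖) := by linarith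
    _ ≤ ‖M - Y * U‖ ^ 2 := norm_sq_sub_two_mul_norm_mul_norm_le_norm_sub_sq _ _
    _ = ‖(U * Uᵀ - Y) * U‖ ^ 2 := by rw [Matrix.sub_mul]

/-- Symmetric matrix factorization gradient norm lower bound:
`‖(UUᵀ − Y)U‖_F² ≥ (1/n²)‖U‖_F⁶ − 2‖Y‖_F‖U‖_F⁴` for symmetric `Y`. -/
theorem symmetric_factorization_gradient_lower_bound (n r : ℕ)
    (Y : Matrix (Fin n) (Fin n) ℝ) (hY : Y.IsSymm)
    (U : Matrix (Fin n) (Fin r) ℝ) :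
    ∑ i, ∑ j, ((U * Uᵀ - Y) * U) i j ^ 2
      ≥ (1 / (n : ℝ) ^ 2) * (Real.sqrt (∑ i, ∑ j, U i j ^ 2)) ^ 6
        - 2 * Real.sqrt (∑ i, ∑ j, Y i j ^ 2) * (Real.sqrt (∑ i, ∑ j, U i j ^ 2)) ^ 4 :=
  symmetric_factorization_gradient_lower_bound_general n r Y U
end

section
/- Let Q(w, z) = z·(4w² − 16.4w + 16) with constraints w = exp(z) and z = r² ≥ 0 (so w ≥ 1). Then Q(w, z) > −0.8 for all r ≥ 0; in particular 4w² − 16.4w + 16 is negative only for 1.6 < w < 2.5, attains minimum −0.81 at w = 2.05, and z < ln(2.5) on that range so Q > −0.81·ln(2.5) > −0.8. -/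
/-!
The quadratic `4w² − 16.4w + 16 = 4(w − 2.05)² − 0.81` is negative only for `1.6 < w < 2.5`.
With `w = exp z`, it can therefore only be negative while `z < log 2.5`, and there the product
`z · (4w² − 16.4w + 16)` is at least `−0.81 · log 2.5`. Finally `log 2.5 < 80/81` because
`2.5 < (1 + 10/81)⁸ ≤ exp (80/81)`.
-/

open Real

lemma quadratic_neg_iff (w : ℝ) : 4 * w ^ 2 - 16.4 * w + 16 < 0 ↔ 1.6 < w ∧ w < 2.5 := by
  constructor
  · intro h
    exact ⟨by nlinarith [sq_nonneg (w - 2.5)], by nlinarith [sq_nonneg (w - 1.6)]⟩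
  · rintro ⟨h₁, h₂⟩
    nlinarith

lemma quadratic_ge (w : ℝ) : 4 * w ^ 2 - 16.4 * w + 16 ≥ -0.81 := by
  nlinarith [sq_nonneg (w - 2.05)]

lemma log_two_point_five_lt : log 2.5 < 80 / 81 := by
  rw [log_lt_iff_lt_exp (by norm_num)]
  calc (2.5 : ℝ) < (10 / 81 + 1) ^ 8 := by norm_num
    _ ≤ exp (10 / 81) ^ 8 := by gcongr; exact add_one_le_exp _
    _ = exp (80 / 81) := by rw [← exp_nat_mul]; norm_num

lemma mul_quadratic_exp_ge {z : ℝ} (hz : 0 ≤ z) :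
    -0.81 * log 2.5 ≤ z * (4 * exp z ^ 2 - 16.4 * exp z + 16) := by
  have hlog : 0 < log 2.5 := log_pos (by norm_num)
  rcases le_or_gt 0 (4 * exp z ^ 2 - 16.4 * exp z + 16) with hq | hq
  · nlinarith [mul_nonneg hz hq]
  · have hz_lt : z < log 2.5 := by
      rw [lt_log_iff_exp_lt (by norm_num)]
      exact ((quadratic_neg_iff _).mp hq).2
    nlinarith [quadratic_ge (exp z)]

/-- With `Q(w,z) = z(4w² − 16.4w + 16)`, `w = exp(z)`, `z = r² ≥ 0`: `Q > −0.8` for all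
`r ≥ 0`; the quadratic is negative exactly for `1.6 < w < 2.5`, attains its minimum
`−0.81` at `w = 2.05`, and `−0.81·ln(2.5) > −0.8`. -/
theorem Q_lower_bound :
    (∀ r : ℝ, 0 ≤ r →
      r ^ 2 * (4 * Real.exp (r ^ 2) ^ 2 - 16.4 * Real.exp (r ^ 2) + 16) > -0.8) ∧
    (∀ w : ℝ, 4 * w ^ 2 - 16.4 * w + 16 < 0 ↔ 1.6 < w ∧ w < 2.5) ∧
    (∀ w : ℝ, 4 * w ^ 2 - 16.4 * w + 16 ≥ -0.81) ∧
    (4 * (2.05 : ℝ) ^ 2 - 16.4 * 2.05 + 16 = -0.81) ∧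
    (-0.81 * Real.log 2.5 > (-0.8 : ℝ)) := by
  have hlog := log_two_point_five_lt
  refine ⟨fun r _ => ?_, quadratic_neg_iff, quadratic_ge, by norm_num, by linarith⟩
  linarith [mul_quadratic_exp_ge (sq_nonneg r)]
end
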